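/- arXiv:math/0512492 — 2 statements merged into one kernel-verified Lean document; each statement's English description precedes it below -/
import Mathlib

section
/- Let μ be a Borel probability measure on ℝ that is absolutely continuous with respect to Lebesgue measure, let t > 0, and let σ_t denote the Gaussian distribution on ℝ with mean 0 and variance t. Suppose μ((-∞, 0]) ≠ 0 and μ([0, ∞)) ≠ 0. Then every measurable function f : ℝ → ℝ that is square-integrable with respect to the convolution μ ∗ σ_t is also square-integrable with respect to σ_t. -/
/-!
Where `x u ≥ 0` we have `(u - x)² ≤ u² + x²`, so on that half-line the density of `σ_t` is at
most `exp (x² / 2t)` times the density of the shifted Gaussian `δ_x ∗ σ_t`. Finiteness of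
`∫ f² d(μ ∗ σ_t) = ∫∫ f²(x + s) dσ_t(s) dμ(x)` gives `∫ f²(x + s) dσ_t(s) < ∞` for `μ`-a.e. `x`,
and since `μ` charges both half-lines we may take such an `x ≤ 0` and such an `x ≥ 0`: together
they control `∫ f² dσ_t` on `(-∞, 0]` and on `[0, ∞)`.
-/

open MeasureTheory ProbabilityTheory Real
open scoped ENNReal NNReal

lemma gaussianPDFReal_le_exp_mul_gaussianPDFReal (t : ℝ≥0) {x u : ℝ} (hux : 0 ≤ u * x) :
    gaussianPDFReal 0 t u ≤ rexp (x ^ 2 / (2 * t)) * gaussianPDFReal x t u := by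
  rw [gaussianPDFReal, gaussianPDFReal, mul_left_comm, ← exp_add]
  gcongr
  rw [← add_div]
  gcongr
  nlinarith

lemma restrict_gaussianReal_le_smul_gaussianReal {t : ℝ≥0} (ht : t ≠ 0) {x : ℝ} {S : Set ℝ}
    (hS : MeasurableSet S) (hSx : ∀ u ∈ S, 0 ≤ u * x) :
    (gaussianReal 0 t).restrict S ≤ ENNReal.ofReal (rexp (x ^ 2 / (2 * t))) • gaussianReal x t := by
  rw [gaussianReal_of_var_ne_zero _ ht, gaussianReal_of_var_ne_zero _ ht,
    ← withDensity_smul _ (measurable_gaussianPDF _ _)]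
  calc ((volume : Measure ℝ).withDensity (gaussianPDF 0 t)).restrict S
      ≤ ((volume : Measure ℝ).withDensity
          (ENNReal.ofReal (rexp (x ^ 2 / (2 * t))) • gaussianPDF x t)).restrict S := by
        rw [restrict_withDensity hS, restrict_withDensity hS]
        refine withDensity_mono ((ae_restrict_iff' hS).2 (ae_of_all _ fun u hu ↦ ?_))
        rw [Pi.smul_apply, smul_eq_mul, gaussianPDF, gaussianPDF,
          ← ENNReal.ofReal_mul (exp_nonneg _)]
        exact ENNReal.ofReal_le_ofReal (gaussianPDFReal_le_exp_mul_gaussianPDFReal t (hSx u hu))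
    _ ≤ _ := Measure.restrict_le_self

lemma setLIntegral_gaussianReal_le_mul_lintegral_add {t : ℝ≥0} (ht : t ≠ 0) {x : ℝ} {S : Set ℝ}
    (hS : MeasurableSet S) (hSx : ∀ u ∈ S, 0 ≤ u * x) {F : ℝ → ℝ≥0∞} (hF : Measurable F) :
    ∫⁻ u in S, F u ∂gaussianReal 0 t
      ≤ ENNReal.ofReal (rexp (x ^ 2 / (2 * t))) * ∫⁻ s, F (x + s) ∂gaussianReal 0 t := by
  have hshift : ∫⁻ s, F (x + s) ∂gaussianReal 0 t = ∫⁻ u, F u ∂gaussianReal x t := by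
    rw [← lintegral_map hF (measurable_const_add x), gaussianReal_map_const_add, zero_add]
  rw [hshift, ← smul_eq_mul, ← lintegral_smul_measure]
  exact lintegral_mono' (restrict_gaussianReal_le_smul_gaussianReal ht hS hSx) le_rfl

lemma exists_mem_lintegral_add_lt_top_of_lintegral_conv_ne_top {G : Type*} [AddMonoid G]
    [MeasurableSpace G] [MeasurableAdd₂ G] {μ ν : Measure G} [SFinite ν] {F : G → ℝ≥0∞}
    (hF : Measurable F) (hconv : ∫⁻ z, F z ∂(μ ∗ ν) ≠ ∞) {S : Set G} (hS : μ S ≠ 0) :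
    ∃ x ∈ S, ∫⁻ y, F (x + y) ∂ν < ∞ := by
  rw [Measure.lintegral_conv hF] at hconv
  have hmeas : Measurable fun x ↦ ∫⁻ y, F (x + y) ∂ν :=
    (hF.comp measurable_add).lintegral_prod_right'
  exact Measure.exists_mem_of_measure_ne_zero_of_ae hS (ae_restrict_of_ae (ae_lt_top hmeas hconv))

lemma lintegral_gaussianReal_lt_top_of_lintegral_conv_ne_top {μ : Measure ℝ} {t : ℝ≥0}
    (ht : t ≠ 0) (hneg : μ (Set.Iic 0) ≠ 0) (hpos : μ (Set.Ici 0) ≠ 0) {F : ℝ → ℝ≥0∞}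
    (hF : Measurable F) (hconv : ∫⁻ z, F z ∂(μ ∗ gaussianReal 0 t) ≠ ∞) :
    ∫⁻ u, F u ∂gaussianReal 0 t < ∞ := by
  obtain ⟨xn, hxn, hxn_fin⟩ :=
    exists_mem_lintegral_add_lt_top_of_lintegral_conv_ne_top hF hconv hneg
  obtain ⟨xp, hxp, hxp_fin⟩ :=
    exists_mem_lintegral_add_lt_top_of_lintegral_conv_ne_top hF hconv hpos
  have hIic := setLIntegral_gaussianReal_le_mul_lintegral_add ht measurableSet_Iic
    (fun u hu ↦ mul_nonneg_of_nonpos_of_nonpos hu hxn) hF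
  have hIci := setLIntegral_gaussianReal_le_mul_lintegral_add ht measurableSet_Ici
    (fun u hu ↦ mul_nonneg hu hxp) hF
  calc ∫⁻ u, F u ∂gaussianReal 0 t
      = ∫⁻ u in Set.Iic 0 ∪ Set.Ici 0, F u ∂gaussianReal 0 t := by
        rw [Set.Iic_union_Ici, Measure.restrict_univ]
    _ ≤ ∫⁻ u in Set.Iic 0, F u ∂gaussianReal 0 t + ∫⁻ u in Set.Ici 0, F u ∂gaussianReal 0 t :=
        lintegral_union_le _ _ _
    _ < ∞ := ENNReal.add_lt_top.2
        ⟨hIic.trans_lt (ENNReal.mul_lt_top ENNReal.ofReal_lt_top hxn_fin),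
          hIci.trans_lt (ENNReal.mul_lt_top ENNReal.ofReal_lt_top hxp_fin)⟩

theorem memL2_gaussian_of_memL2_conv_general
    (μ : Measure ℝ)
    (t : NNReal) (ht : 0 < t)
    (hneg : μ (Set.Iic 0) ≠ 0) (hpos : μ (Set.Ici 0) ≠ 0)
    (f : ℝ → ℝ) (hf : Measurable f)
    (hmem : MemLp f 2 (Measure.conv μ (gaussianReal 0 t))) :
    MemLp f 2 (gaussianReal 0 t) := by
  rw [memLp_two_iff_integrable_sq hf.aestronglyMeasurable] at hmem ⊢
  exact ⟨(hf.pow_const 2).aestronglyMeasurable,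
    lintegral_gaussianReal_lt_top_of_lintegral_conv_ne_top ht.ne' hneg hpos
      (hf.pow_const 2).enorm hmem.2.ne⟩

/-- If `μ` is a Lebesgue-absolutely continuous probability measure on `ℝ` charging both
`(-∞, 0]` and `[0, ∞)`, and `σ_t` is the centered Gaussian measure with variance `t > 0`,
then `L²(μ ∗ σ_t) ⊆ L²(σ_t)`. -/
theorem memL2_gaussian_of_memL2_conv
    (μ : Measure ℝ) [IsProbabilityMeasure μ] (hac : μ ≪ volume)
    (t : NNReal) (ht : 0 < t)
    (hneg : μ (Set.Iic 0) ≠ 0) (hpos : μ (Set.Ici 0) ≠ 0)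
    (f : ℝ → ℝ) (hf : Measurable f)
    (hmem : MemLp f 2 (Measure.conv μ (gaussianReal 0 t))) :
    MemLp f 2 (gaussianReal 0 t) :=
  memL2_gaussian_of_memL2_conv_general μ t ht hneg hpos f hf hmem
end

section
/- Let μ be a compactly supported Borel probability measure on ℝ with moments m_k = ∫_ℝ t^k dμ(t). Suppose m_0 = 1 and that for every k ≥ 0 the moments satisfy the recursion m_{k+1} = Σ_{i=0}^{k-1} m_i · m_{k-1-i} (where the empty sum for k = 0 is 0). Then μ is the standard (0,1)-semicircle law, i.e. the measure with density t ↦ (1/(2π))·√(4 - t²) on [-2, 2] with respect to Lebesgue measure. -/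
open MeasureTheory Real Finset intervalIntegral
open scoped ENNReal NNReal BoundedContinuousFunction

namespace SemicircleProofAux

/-! ### The target moment sequence: Catalan numbers at even indices -/

noncomputable def c (n : ℕ) : ℝ := if Even n then (catalan (n / 2) : ℝ) else 0

lemma c_even (j : ℕ) : c (2 * j) = catalan j := by
  simp [c, Nat.mul_div_cancel_left, even_two_mul]

lemma c_odd {n : ℕ} (h : ¬ Even n) : c n = 0 := if_neg h

lemma c_zero : c 0 = 1 := by simpa using c_even 0

lemma c_one : c 1 = 0 := c_odd (by simp)

lemma catalan_key (m : ℕ) : (m + 2) * catalan (m + 1) = 2 * (2 * m + 1) * catalan m := by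
  have h1 := succ_mul_catalan_eq_centralBinom (m + 1)
  have h2 := Nat.succ_mul_centralBinom_succ m
  have h3 := succ_mul_catalan_eq_centralBinom m
  apply Nat.eq_of_mul_eq_mul_left (show 0 < m + 1 by omega)
  calc (m + 1) * ((m + 2) * catalan (m + 1))
      = (m + 1) * ((m + 1 + 1) * catalan (m + 1)) := by ring_nf
    _ = (m + 1) * Nat.centralBinom (m + 1) := by rw [h1]
    _ = 2 * (2 * m + 1) * Nat.centralBinom m := h2
    _ = 2 * (2 * m + 1) * ((m + 1) * catalan m) := by rw [h3]
    _ = (m + 1) * (2 * (2 * m + 1) * catalan m) := by ring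

lemma c_rec (n : ℕ) : ((n : ℝ) + 4) * c (n + 2) = 4 * ((n : ℝ) + 1) * c n := by
  rcases Nat.even_or_odd n with ⟨m, hm⟩ | ⟨m, hm⟩
  · subst hm
    rw [show m + m = 2 * m by ring, show 2 * m + 2 = 2 * (m + 1) by ring, c_even, c_even]
    have key : ((m:ℝ) + 2) * catalan (m+1) = 2 * (2*(m:ℝ)+1) * catalan m := by
      exact_mod_cast catalan_key m
    push_cast
    nlinarith [key]
  · have h1 : ¬ Even n := by rw [Nat.even_iff]; omega
    have h2 : ¬ Even (n + 2) := by rw [Nat.even_iff]; omega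
    rw [c_odd h1, c_odd h2]; ring

lemma sum_even_vanish (g : ℕ → ℝ) (m : ℕ) :
    ∑ i ∈ range (2 * m + 1), (if Even i then g i else 0) = ∑ j ∈ range (m + 1), g (2 * j) := by
  induction m with
  | zero => simp
  | succ m ih =>
    rw [show 2 * (m + 1) + 1 = (2 * m + 1) + 1 + 1 by ring, Finset.sum_range_succ,
      Finset.sum_range_succ, ih, Finset.sum_range_succ (n := m + 1)]
    have h1 : ¬ Even (2 * m + 1) := by rw [Nat.even_iff]; omega
    have h2 : Even (2 * m + 1 + 1) := by rw [Nat.even_iff]; omega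
    rw [if_neg h1, if_pos h2, show 2 * m + 1 + 1 = 2 * (m + 1) by ring]
    ring

lemma c_conv (k : ℕ) : ∑ i ∈ range k, c i * c (k - 1 - i) = c (k + 1) := by
  rcases Nat.even_or_odd k with ⟨m, hm⟩ | ⟨m, hm⟩
  · have hk1 : ¬ Even (k + 1) := by rw [Nat.even_iff]; omega
    rw [c_odd hk1, Finset.sum_eq_zero]
    intro i hi
    rw [Finset.mem_range] at hi
    rcases Nat.even_or_odd i with ⟨j, hj⟩ | hio
    · have : ¬ Even (k - 1 - i) := by rw [Nat.even_iff]; omega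
      rw [c_odd this, mul_zero]
    · have : ¬ Even i := by rcases hio with ⟨j, hj⟩; rw [Nat.even_iff]; omega
      rw [c_odd this, zero_mul]
  · have hk : k = 2 * m + 1 := by omega
    subst hk
    have hsub : ∀ i, 2 * m + 1 - 1 - i = 2 * m - i := by omega
    simp only [hsub]
    have step1 : ∑ i ∈ range (2 * m + 1), c i * c (2 * m - i)
        = ∑ i ∈ range (2 * m + 1), (if Even i then c i * c (2 * m - i) else 0) := by
      apply Finset.sum_congr rfl
      intro i _
      by_cases h : Even i
      · rw [if_pos h]
      · rw [if_neg h, c_odd h, zero_mul]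
    rw [step1, sum_even_vanish]
    have step2 : ∀ j ∈ range (m + 1), c (2 * j) * c (2 * m - 2 * j)
        = ((catalan j * catalan (m - j) : ℕ) : ℝ) := by
      intro j hj
      rw [Finset.mem_range] at hj
      rw [show 2 * m - 2 * j = 2 * (m - j) by omega, c_even, c_even]
      push_cast; ring
    rw [Finset.sum_congr rfl step2, show 2 * m + 1 + 1 = 2 * (m + 1) by ring, c_even,
      catalan_succ']
    rw [Nat.sum_antidiagonal_eq_sum_range_succ (fun x y => catalan x * catalan y) m]
    rw [← Nat.cast_sum]

/-! ### Wallis-type integrals -/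

noncomputable def S (n : ℕ) : ℝ := ∫ x in (-(π/2))..(π/2), Real.sin x ^ n

lemma S_zero : S 0 = π := by simp [S]

lemma S_one : S 1 = 0 := by simp [S]

lemma S_rec (n : ℕ) : S (n + 2) = ((n : ℝ) + 1) / ((n : ℝ) + 2) * S n := by
  have := @integral_sin_pow (-(π/2)) (π/2) n
  simpa [S, Real.cos_pi_div_two] using this

noncomputable def J (n : ℕ) : ℝ := ∫ x in (-2 : ℝ)..2, x ^ n * Real.sqrt (4 - x ^ 2)

lemma J_eq (n : ℕ) : J n = 2 ^ (n + 2) * (S n - S (n + 2)) := by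
  have hg : Continuous fun u : ℝ => u ^ n * Real.sqrt (4 - u ^ 2) := by fun_prop
  have hderiv : ∀ x ∈ Set.uIcc (-(π/2)) (π/2),
      HasDerivAt (fun x => 2 * Real.sin x) (2 * Real.cos x) x := by
    intro x _
    exact (Real.hasDerivAt_sin x).const_mul 2
  have hcont : ContinuousOn (fun x => 2 * Real.cos x) (Set.uIcc (-(π/2)) (π/2)) := by fun_prop
  have key := integral_comp_mul_deriv hderiv hcont hg
  have hends : (2 * Real.sin (-(π/2)) : ℝ) = -2 ∧ (2 * Real.sin (π/2) : ℝ) = 2 := by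
    simp [Real.sin_pi_div_two]
  rw [hends.1, hends.2] at key
  rw [J, ← key]
  have congr1 : ∀ x ∈ Set.uIoc (-(π/2)) (π/2),
      ((fun u : ℝ => u ^ n * Real.sqrt (4 - u ^ 2)) ∘ fun x => 2 * Real.sin x) x * (2 * Real.cos x)
        = 2 ^ (n + 2) * (Real.sin x ^ n * Real.cos x ^ 2) := by
    intro x hx
    rw [Set.uIoc_of_le (by linarith [Real.pi_pos] : -(π/2) ≤ π/2)] at hx
    have hcos : 0 ≤ Real.cos x := Real.cos_nonneg_of_mem_Icc ⟨le_of_lt hx.1, hx.2⟩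
    have h4 : 4 - (2 * Real.sin x) ^ 2 = (2 * Real.cos x) ^ 2 := by
      have := Real.sin_sq_add_cos_sq x
      ring_nf
      nlinarith [this]
    simp only [Function.comp_apply, h4]
    rw [Real.sqrt_sq (by linarith)]
    ring
  rw [intervalIntegral.integral_congr_ae (MeasureTheory.ae_of_all _ congr1)]
  have hsplit : ∀ x : ℝ, Real.sin x ^ n * Real.cos x ^ 2
      = Real.sin x ^ n - Real.sin x ^ (n + 2) := by
    intro x
    rw [Real.cos_sq']
    ring
  simp only [hsplit]
  rw [intervalIntegral.integral_const_mul, intervalIntegral.integral_sub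
    (by apply Continuous.intervalIntegrable; fun_prop)
    (by apply Continuous.intervalIntegrable; fun_prop)]
  rfl

lemma J_zero : J 0 = 2 * π := by
  have h2 := S_rec 0
  rw [J_eq, h2, S_zero]
  norm_num
  ring

lemma J_one : J 1 = 0 := by
  have h3 := S_rec 1
  rw [J_eq, h3, S_one]
  norm_num

lemma J_rec (n : ℕ) : ((n : ℝ) + 4) * J (n + 2) = 4 * ((n : ℝ) + 1) * J n := by
  have h1 := S_rec n
  have h2 := S_rec (n + 2)
  rw [J_eq, J_eq, h2, h1]
  push_cast
  have hne1 : (n : ℝ) + 2 ≠ 0 := by positivity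
  have hne2 : (n : ℝ) + 4 ≠ 0 := by positivity
  field_simp
  ring

/-! ### The semicircle measure and its moments -/

noncomputable def h (x : ℝ) : ℝ :=
  Set.indicator (Set.Icc (-2 : ℝ) 2) (fun y => (2 * Real.pi)⁻¹ * Real.sqrt (4 - y ^ 2)) x

noncomputable def ν : Measure ℝ := volume.withDensity fun x => ENNReal.ofReal (h x)

lemma h_nonneg (x : ℝ) : 0 ≤ h x := by
  unfold h
  apply Set.indicator_nonneg
  intro y _
  positivity

lemma h_meas : Measurable h := by
  unfold h
  apply Measurable.indicator _ measurableSet_Icc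
  fun_prop

lemma h_mul_integral (g : ℝ → ℝ) (hg : Continuous g) :
    ∫ x, h x * g x = (2 * π)⁻¹ * ∫ x in (-2 : ℝ)..2, g x * Real.sqrt (4 - x ^ 2) := by
  have : (fun x => h x * g x)
      = Set.indicator (Set.Icc (-2 : ℝ) 2)
          (fun y => (2 * Real.pi)⁻¹ * (g y * Real.sqrt (4 - y ^ 2))) := by
    funext x
    unfold h
    by_cases hx : x ∈ Set.Icc (-2 : ℝ) 2
    · simp [Set.indicator_of_mem hx]; ring
    · simp [Set.indicator_of_notMem hx]
  rw [this, MeasureTheory.integral_indicator measurableSet_Icc]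
  rw [MeasureTheory.integral_Icc_eq_integral_Ioc,
    ← intervalIntegral.integral_of_le (by norm_num : (-2:ℝ) ≤ 2)]
  rw [intervalIntegral.integral_const_mul]

lemma nu_moment (n : ℕ) : ∫ x, x ^ n ∂ν = (2 * π)⁻¹ * J n := by
  unfold ν
  have hmeas : Measurable fun x => (h x).toNNReal := h_meas.real_toNNReal
  have hident : (fun x => ENNReal.ofReal (h x)) = fun x => ((h x).toNNReal : ℝ≥0∞) := rfl
  rw [hident, integral_withDensity_eq_integral_smul hmeas]
  have : (fun x => (h x).toNNReal • x ^ n) = fun x => h x * x ^ n := by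
    funext x
    rw [NNReal.smul_def, Real.coe_toNNReal _ (h_nonneg x)]
    rfl
  rw [this, h_mul_integral _ (by fun_prop)]
  unfold J
  congr 1

instance : IsProbabilityMeasure ν := by
  constructor
  unfold ν
  rw [withDensity_apply _ MeasurableSet.univ, Measure.restrict_univ]
  have hint : Integrable h := by
    unfold h
    rw [integrable_indicator_iff measurableSet_Icc]
    apply ContinuousOn.integrableOn_Icc
    fun_prop
  rw [← MeasureTheory.ofReal_integral_eq_lintegral_ofReal hint (ae_of_all _ h_nonneg)]
  have h1 : ∫ x, h x = (2 * π)⁻¹ * ∫ x in (-2 : ℝ)..2, (1 : ℝ) * Real.sqrt (4 - x ^ 2) := by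
    have := h_mul_integral (fun _ => 1) continuous_const
    simpa using this
  have hJ0 : ∫ x in (-2 : ℝ)..2, (1 : ℝ) * Real.sqrt (4 - x ^ 2) = 2 * π := by
    have := J_zero
    unfold J at this
    simpa using this
  rw [h1, hJ0, inv_mul_cancel₀ (by positivity : (2 * π : ℝ) ≠ 0), ENNReal.ofReal_one]

lemma nu_outside : ν (Set.Icc (-2 : ℝ) 2)ᶜ = 0 := by
  unfold ν
  rw [withDensity_apply _ measurableSet_Icc.compl]
  have : ∀ᵐ x ∂(volume.restrict (Set.Icc (-2:ℝ) 2)ᶜ), ENNReal.ofReal (h x) = 0 := by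
    rw [ae_restrict_iff' measurableSet_Icc.compl]
    apply ae_of_all
    intro x hx
    unfold h
    rw [Set.indicator_of_notMem hx]
    simp
  rw [lintegral_congr_ae this]
  simp

lemma nu_moment_eq_c (n : ℕ) : ∫ x, x ^ n ∂ν = c n := by
  induction n using Nat.twoStepInduction with
  | zero => rw [nu_moment, J_zero, c_zero, inv_mul_cancel₀ (by positivity : (2 * π : ℝ) ≠ 0)]
  | one => rw [nu_moment, J_one, c_one, mul_zero]
  | more n ih _ =>
    have h4 : ((n : ℝ) + 4) ≠ 0 := by positivity
    apply mul_left_cancel₀ h4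
    calc ((n : ℝ) + 4) * ∫ x, x ^ (n + 2) ∂ν
        = ((n : ℝ) + 4) * ((2 * π)⁻¹ * J (n + 2)) := by rw [nu_moment]
      _ = (2 * π)⁻¹ * (((n : ℝ) + 4) * J (n + 2)) := by ring
      _ = (2 * π)⁻¹ * (4 * ((n : ℝ) + 1) * J n) := by rw [J_rec]
      _ = 4 * ((n : ℝ) + 1) * ((2 * π)⁻¹ * J n) := by ring
      _ = 4 * ((n : ℝ) + 1) * ∫ x, x ^ n ∂ν := by rw [nu_moment]
      _ = 4 * ((n : ℝ) + 1) * c n := by rw [ih]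
      _ = ((n : ℝ) + 4) * c (n + 2) := (c_rec n).symm

/-! ### Uniqueness from moments -/

lemma coe_lip : LipschitzWith 1 ((↑) : ℝ≥0 → ℝ) :=
  LipschitzWith.of_dist_le_mul fun x y => by rw [NNReal.dist_eq]; simp [abs_sub_comm, dist_eq]

lemma ext_of_moments (μ ν' : Measure ℝ) [IsProbabilityMeasure μ] [IsProbabilityMeasure ν']
    (R : ℝ) (hμ : μ (Set.Icc (-R) R)ᶜ = 0) (hν : ν' (Set.Icc (-R) R)ᶜ = 0)
    (hmom : ∀ n : ℕ, ∫ x, x ^ n ∂μ = ∫ x, x ^ n ∂ν') : μ = ν' := by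
  have hμae : ∀ᵐ x ∂μ, x ∈ Set.Icc (-R) R := by
    rw [ae_iff]
    simpa [Set.compl_def] using hμ
  have hνae : ∀ᵐ x ∂ν', x ∈ Set.Icc (-R) R := by
    rw [ae_iff]
    simpa [Set.compl_def] using hν
  have hipow : ∀ (m : Measure ℝ), IsProbabilityMeasure m → (∀ᵐ x ∂m, x ∈ Set.Icc (-R) R) →
      ∀ n : ℕ, Integrable (fun x : ℝ => x ^ n) m := by
    intro m _ hae n
    apply Integrable.mono' (integrable_const (R ^ n)) (continuous_pow n).aestronglyMeasurable
    filter_upwards [hae] with x hx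
    rw [Real.norm_eq_abs, abs_pow]
    exact pow_le_pow_left₀ (abs_nonneg x) (abs_le.mpr ⟨hx.1, hx.2⟩) n
  have hμpow := hipow μ inferInstance hμae
  have hνpow := hipow ν' inferInstance hνae
  have hipoly : ∀ (m : Measure ℝ), IsProbabilityMeasure m → (∀ᵐ x ∂m, x ∈ Set.Icc (-R) R) →
      ∀ p : Polynomial ℝ, Integrable (fun x => p.eval x) m := by
    intro m hm hae p
    have : (fun x => p.eval x)
        = fun x => ∑ i ∈ range (p.natDegree + 1), p.coeff i * x ^ i := by
      funext x; exact Polynomial.eval_eq_sum_range (p := p) x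
    rw [this]
    apply integrable_finset_sum
    intro i _
    exact (hipow m hm hae i).const_mul _
  have hpoly : ∀ p : Polynomial ℝ, ∫ x, p.eval x ∂μ = ∫ x, p.eval x ∂ν' := by
    intro p
    have hμ' : ∫ x, p.eval x ∂μ
        = ∑ i ∈ range (p.natDegree + 1), p.coeff i * ∫ x, x ^ i ∂μ := by
      rw [show (fun x => p.eval x) = fun x => ∑ i ∈ range (p.natDegree + 1), p.coeff i * x ^ i
        from funext fun x => Polynomial.eval_eq_sum_range (p := p) x]
      rw [integral_finset_sum _ fun i _ => (hμpow i).const_mul _]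
      simp_rw [MeasureTheory.integral_const_mul]
    have hν' : ∫ x, p.eval x ∂ν'
        = ∑ i ∈ range (p.natDegree + 1), p.coeff i * ∫ x, x ^ i ∂ν' := by
      rw [show (fun x => p.eval x) = fun x => ∑ i ∈ range (p.natDegree + 1), p.coeff i * x ^ i
        from funext fun x => Polynomial.eval_eq_sum_range (p := p) x]
      rw [integral_finset_sum _ fun i _ => (hνpow i).const_mul _]
      simp_rw [MeasureTheory.integral_const_mul]
    rw [hμ', hν']
    exact Finset.sum_congr rfl fun i _ => by rw [hmom i]
  have hbcf : ∀ f : ℝ →ᵇ ℝ, ∫ x, f x ∂μ = ∫ x, f x ∂ν' := by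
    intro f
    by_contra hne
    set d := |(∫ x, f x ∂μ) - ∫ x, f x ∂ν'| with hd
    have hdpos : 0 < d := abs_pos.mpr (sub_ne_zero.mpr hne)
    obtain ⟨p, hp⟩ := exists_polynomial_near_of_continuousOn (-R) R f
      f.continuous.continuousOn (d / 3) (by positivity)
    have est : ∀ (m : Measure ℝ), IsProbabilityMeasure m → (∀ᵐ x ∂m, x ∈ Set.Icc (-R) R) →
        |(∫ x, f x ∂m) - ∫ x, p.eval x ∂m| ≤ d / 3 := by
      intro m hm hae
      rw [← integral_sub (f.integrable m) (hipoly m hm hae p)]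
      rw [← Real.norm_eq_abs]
      calc ‖∫ x, (f x - p.eval x) ∂m‖ ≤ (d / 3) * (m Set.univ).toReal := by
            apply MeasureTheory.norm_integral_le_of_norm_le_const
            filter_upwards [hae] with x hx
            rw [Real.norm_eq_abs, abs_sub_comm]
            exact le_of_lt (hp x hx)
        _ = d / 3 := by simp
    have e1 := est μ inferInstance hμae
    have e2 := est ν' inferInstance hνae
    have e3 := hpoly p
    have : d ≤ d / 3 + d / 3 := by
      calc d = |((∫ x, f x ∂μ) - ∫ x, p.eval x ∂μ) + ((∫ x, p.eval x ∂ν') - ∫ x, f x ∂ν')| := by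
            rw [hd, e3]; ring_nf
        _ ≤ |(∫ x, f x ∂μ) - ∫ x, p.eval x ∂μ| + |(∫ x, p.eval x ∂ν') - ∫ x, f x ∂ν'| :=
            abs_add_le _ _
        _ ≤ d / 3 + d / 3 := by rw [abs_sub_comm (∫ x, p.eval x ∂ν')]; exact add_le_add e1 e2
    linarith
  apply ext_of_forall_lintegral_eq_of_IsFiniteMeasure
  intro f
  have hfin1 : ∫⁻ x, f x ∂μ ≠ ⊤ := (f.lintegral_lt_top_of_nnreal μ).ne
  have hfin2 : ∫⁻ x, f x ∂ν' ≠ ⊤ := (f.lintegral_lt_top_of_nnreal ν').ne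
  rw [← ENNReal.toReal_eq_toReal_iff' hfin1 hfin2,
    BoundedContinuousFunction.toReal_lintegral_coe_eq_integral,
    BoundedContinuousFunction.toReal_lintegral_coe_eq_integral]
  exact hbcf (f.comp _ coe_lip)

end SemicircleProofAux

open SemicircleProofAux in
/-- A compactly supported probability measure on `ℝ` whose moments satisfy the recursion
`m_{k+1} = ∑_{i=0}^{k-1} m_i * m_{k-1-i}` is the standard (0,1)-semicircle law. -/
theorem semicircle_of_moment_recursion
    (μ : Measure ℝ) [IsProbabilityMeasure μ]
    (hsupp : ∃ K : Set ℝ, IsCompact K ∧ μ Kᶜ = 0)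
    (hrec : ∀ k : ℕ, ∫ x, x ^ (k + 1) ∂μ =
      ∑ i ∈ Finset.range k, (∫ x, x ^ i ∂μ) * ∫ x, x ^ (k - 1 - i) ∂μ) :
    μ = volume.withDensity fun x => ENNReal.ofReal
      (Set.indicator (Set.Icc (-2 : ℝ) 2)
        (fun y => (2 * Real.pi)⁻¹ * Real.sqrt (4 - y ^ 2)) x) := by
  -- moments of μ are the Catalan moments
  have hmomμ : ∀ n : ℕ, ∫ x, x ^ n ∂μ = c n := by
    intro n
    induction n using Nat.strong_induction_on with
    | _ n ih =>
      match n with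
      | 0 => simpa using c_zero.symm
      | (k + 1) =>
        rw [hrec k, ← c_conv k]
        apply Finset.sum_congr rfl
        intro i hi
        rw [Finset.mem_range] at hi
        rw [ih i (by omega), ih (k - 1 - i) (by omega)]
  -- choose a common support interval
  obtain ⟨K, hKc, hKnull⟩ := hsupp
  obtain ⟨r, hr⟩ := hKc.isBounded.subset_closedBall 0
  set R : ℝ := max r 2 with hR
  have hKsub : K ⊆ Set.Icc (-R) R := by
    intro x hx
    have := hr hx
    rw [Real.closedBall_eq_Icc] at this
    constructor
    · calc -R ≤ -r := by simp [hR]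
        _ ≤ x := by simpa using this.1
    · calc x ≤ 0 + r := this.2
        _ ≤ R := by simp [hR]
  have hμR : μ (Set.Icc (-R) R)ᶜ = 0 :=
    measure_mono_null (Set.compl_subset_compl.mpr hKsub) hKnull
  have hνR : ν (Set.Icc (-R) R)ᶜ = 0 := by
    apply measure_mono_null _ nu_outside
    apply Set.compl_subset_compl.mpr
    apply Set.Icc_subset_Icc
    · simp [hR]
    · simp [hR]
  have : μ = ν := by
    apply ext_of_moments μ ν R hμR hνR
    intro n
    rw [hmomμ n, nu_moment_eq_c n]
  exact this
end
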